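/- Let X be a real-valued random variable such that E e^{tX} < ∞ for some t > 0, and let L_X(t) := ln E e^{tX} for t > 0. Then for every u ∈ ℝ, P(X > L_X^{*←}(u)) ≤ e^{−u}, where the event {X > −∞} is all of the sample space and {X > ∞} is empty when L_X^{*←}(u) is infinite. -/

import Mathlib

open Set MeasureTheory Filter

/-- Legendre–Fenchel transform `L^*(x) = sup_{t>0} [t·x − L(t)]`, with values in `[-∞,∞]`. -/
noncomputable def LF (L : ℝ → EReal) (x : ℝ) : EReal :=
  ⨆ (t : ℝ) (_ : 0 < t), ((t * x : ℝ) : EReal) - L t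

/-- Smallest generalized inverse `L^{*←}(u) = inf {x ∈ ℝ : L^*(x) ≥ u}`, with `inf ∅ = ∞`. -/
noncomputable def geInv (L : ℝ → EReal) (u : ℝ) : EReal :=
  sInf ((fun x : ℝ => (x : EReal)) '' {x : ℝ | (u : EReal) ≤ LF L x})

/-- Largest generalized inverse `L^{*⇐}(u) = inf {x ∈ ℝ : L^*(x) > u}`, with `inf ∅ = ∞`. -/
noncomputable def tgeInv (L : ℝ → EReal) (u : ℝ) : EReal :=
  sInf ((fun x : ℝ => (x : EReal)) '' {x : ℝ | (u : EReal) < LF L x})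

/-- Hölder convolution `(L_1 ⊞ ⋯ ⊞ L_n)(t) = inf { Σ_j α_j L_j(t/α_j) : α_j > 0, Σ_j α_j = 1 }`,
with `inf ∅ = ∞`. -/
noncomputable def hconv (n : ℕ) (L : Fin n → ℝ → EReal) (t : ℝ) : EReal :=
  ⨅ (α : Fin n → ℝ) (_ : (∀ j, 0 < α j) ∧ ∑ j, α j = 1),
    ∑ j, (α j : EReal) * L j (t / α j)

/-- Cramér–Chernoff function `L_X(t) = ln E e^{tX}`, with values in `(-∞,∞]`. -/
noncomputable def cramer {Ω : Type*} [MeasurableSpace Ω] (μ : Measure Ω) (X : Ω → ℝ)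
    (t : ℝ) : EReal :=
  ENNReal.log (∫⁻ ω, ENNReal.ofReal (Real.exp (t * X ω)) ∂μ)

/-!
For `t > 0`, Markov's inequality for `e^{tX}` gives `t x + log μ{X > x} ≤ L_X(t)`, so
`L_X^*(x) ≤ -log μ{X > x}`: every real `x` with `L_X^*(x) ≥ u` has `μ{X > x} ≤ e^{-u}`.
Since `L_X^*` is monotone, this applies to every `x > L_X^{*←}(u)`, and the event
`{X > L_X^{*←}(u)}` is the directed union of the events `{X > q}` over rationals
`q > L_X^{*←}(u)`, so continuity from below concludes.
-/

lemma EReal.coe_sub_le_neg_of_add_le {a : ℝ} {b c : EReal} (h : a + b ≤ c) :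
    (a : EReal) - c ≤ -b := by
  rw [EReal.le_neg, EReal.neg_sub (.inl (EReal.coe_ne_bot a)) (.inl (EReal.coe_ne_top a)),
    add_comm, ← sub_eq_add_neg,
    EReal.le_sub_iff_add_le (.inl (EReal.coe_ne_bot a)) (.inl (EReal.coe_ne_top a)), add_comm]
  exact h

lemma monotone_LF (L : ℝ → EReal) : Monotone (LF L) := fun _ _ hxy =>
  iSup₂_mono fun _ ht => EReal.sub_le_sub (by exact_mod_cast mul_le_mul_of_nonneg_left hxy ht.le)
    le_rfl

lemma le_LF_of_geInv_lt {L : ℝ → EReal} {u x : ℝ} (h : geInv L u < x) :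
    (u : EReal) ≤ LF L x := by
  obtain ⟨_, ⟨y, hy, rfl⟩, hyx⟩ := sInf_lt_iff.mp h
  exact hy.trans (monotone_LF L (EReal.coe_lt_coe_iff.mp hyx).le)

section Chernoff

variable {Ω : Type*} [MeasurableSpace Ω] (μ : Measure Ω)

lemma measure_coe_lt_eq_iSup (X : Ω → ℝ) (c : EReal) :
    μ {ω | c < X ω} = ⨆ (x : ℝ) (_ : c < x), μ {ω | x < X ω} := by
  refine le_antisymm ?_ <|
    iSup₂_le fun x hx => measure_mono fun ω hω => hx.trans (by exact_mod_cast hω)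
  have hunion : {ω | c < X ω} = ⋃ q ∈ {q : ℚ | c < (q : ℝ)}, {ω | (q : ℝ) < X ω} := by
    ext ω
    simp only [mem_ofPred_eq, mem_iUnion, exists_prop]
    refine ⟨fun h => ?_, fun ⟨q, hcq, hqX⟩ => hcq.trans (by exact_mod_cast hqX)⟩
    obtain ⟨r, hcr, hrX⟩ := EReal.exists_between_coe_real h
    obtain ⟨q, hrq, hqX⟩ := exists_rat_btwn (EReal.coe_lt_coe_iff.mp hrX)
    exact ⟨q, hcr.trans (by exact_mod_cast hrq), hqX⟩
  have hdir : DirectedOn (Function.onFun (· ⊆ ·) fun q : ℚ => {ω | (q : ℝ) < X ω})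
      {q : ℚ | c < (q : ℝ)} :=
    fun a ha b hb => ⟨min a b, min_rec' _ ha hb,
      fun ω (hω : (a : ℝ) < X ω) => (Rat.cast_le.mpr (min_le_left a b)).trans_lt hω,
      fun ω (hω : (b : ℝ) < X ω) => (Rat.cast_le.mpr (min_le_right a b)).trans_lt hω⟩
  rw [hunion, measure_biUnion_eq_iSup (Set.to_countable _) hdir]
  exact iSup₂_le fun q hq => le_iSup₂_of_le (q : ℝ) hq le_rfl

variable {X : Ω → ℝ}

lemma exp_mul_measure_lt_le_lintegral (hX : Measurable X) {t : ℝ} (ht : 0 ≤ t) (x : ℝ) :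
    ENNReal.ofReal (Real.exp (t * x)) * μ {ω | x < X ω} ≤
      ∫⁻ ω, ENNReal.ofReal (Real.exp (t * X ω)) ∂μ :=
  calc ENNReal.ofReal (Real.exp (t * x)) * μ {ω | x < X ω}
      ≤ ENNReal.ofReal (Real.exp (t * x)) *
          μ {ω | ENNReal.ofReal (Real.exp (t * x)) ≤ ENNReal.ofReal (Real.exp (t * X ω))} := by
        gcongr with ω
        exact fun hω =>
          ENNReal.ofReal_le_ofReal (Real.exp_le_exp.2 (mul_le_mul_of_nonneg_left hω.le ht))
    _ ≤ _ :=
        mul_meas_ge_le_lintegral₀ (measurable_const.mul hX).exp.ennreal_ofReal.aemeasurable _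

lemma LF_cramer_le_neg_log_measure_lt (hX : Measurable X) (x : ℝ) :
    LF (cramer μ X) x ≤ -ENNReal.log (μ {ω | x < X ω}) := by
  refine iSup₂_le fun t ht => EReal.coe_sub_le_neg_of_add_le ?_
  have := ENNReal.log_monotone (exp_mul_measure_lt_le_lintegral μ hX ht.le x)
  rwa [ENNReal.log_mul_add, ENNReal.log_ofReal_of_pos (Real.exp_pos _), Real.log_exp] at this

lemma measure_lt_le_exp_neg_of_le_LF (hX : Measurable X) {x u : ℝ}
    (h : (u : EReal) ≤ LF (cramer μ X) x) :
    μ {ω | x < X ω} ≤ ENNReal.ofReal (Real.exp (-u)) := by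
  rw [← ENNReal.log_le_log_iff, ENNReal.log_ofReal_of_pos (Real.exp_pos _), Real.log_exp,
    EReal.coe_neg]
  exact EReal.le_neg_of_le_neg (h.trans (LF_cramer_le_neg_log_measure_lt μ hX x))

end Chernoff

theorem prob_gt_geInv_le_general (Ω : Type*) [MeasurableSpace Ω] (μ : Measure Ω)
    (X : Ω → ℝ) (hX : Measurable X)
    (u : ℝ) :
    μ {ω | geInv (cramer μ X) u < (X ω : EReal)} ≤ ENNReal.ofReal (Real.exp (-u)) := by
  rw [measure_coe_lt_eq_iSup]
  exact iSup₂_le fun x hx => measure_lt_le_exp_neg_of_le_LF μ hX (le_LF_of_geInv_lt hx)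

/-- For a real random variable `X` with `E e^{tX} < ∞` for some `t > 0`,
one has `P(X > L_X^{*←}(u)) ≤ e^{-u}` for all real `u`. -/
theorem prob_gt_geInv_le (Ω : Type*) [MeasurableSpace Ω] (μ : Measure Ω)
    [IsProbabilityMeasure μ] (X : Ω → ℝ) (hX : Measurable X)
    (hfin : ∃ t : ℝ, 0 < t ∧ ∫⁻ ω, ENNReal.ofReal (Real.exp (t * X ω)) ∂μ ≠ ⊤)
    (u : ℝ) :
    μ {ω | geInv (cramer μ X) u < (X ω : EReal)} ≤ ENNReal.ofReal (Real.exp (-u)) :=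
  prob_gt_geInv_le_general Ω μ X hX u
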